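/- Let G be a tdlc group, H ≤ Aut(G) flat, ρ: H → ℤ a surjective homomorphism, and U a compact open subgroup tidy for H. Then Û_ρ := ⋃_{α ∈ H} α(U_ρ) is a closed subgroup of G, where U_ρ = ⋂{α(U) : α ∈ H, ρ(α) ≥ 0}. -/

import Mathlib

open scoped Pointwise

namespace TdlcFlat

variable {G : Type*} [Group G] [TopologicalSpace G] [IsTopologicalGroup G]

/-- The image α(U) of a subgroup U under an automorphism α of G. -/
def smap (α : MulAut G) (U : Subgroup G) : Subgroup G :=
  U.map α.toMonoidHom

/-- U_{α+} = ⋂_{n ≥ 0} αⁿ(U). -/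
def Uplus (α : MulAut G) (U : Subgroup G) : Subgroup G :=
  ⨅ n : ℕ, smap (α ^ n) U

/-- U_{α−} = ⋂_{n ≥ 0} α⁻ⁿ(U). -/
def Uminus (α : MulAut G) (U : Subgroup G) : Subgroup G :=
  ⨅ n : ℕ, smap (α⁻¹ ^ n) U

/-- U is tidy for α: (TA) U = U_{α+} U_{α−} and (TB) ⋃_{n≥0} α⁻ⁿ(U_{α−}) is closed. -/
def IsTidyFor (α : MulAut G) (U : Subgroup G) : Prop :=
  (U : Set G) = (Uplus α U : Set G) * (Uminus α U : Set G) ∧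
    IsClosed (⋃ n : ℕ, (smap (α⁻¹ ^ n) (Uminus α U) : Set G))

/-- U is a compact open subgroup of G. -/
def IsCompactOpen (U : Subgroup G) : Prop :=
  IsCompact (U : Set G) ∧ IsOpen (U : Set G)

/-- U is tidy for the group of automorphisms H: it is tidy for every α ∈ H.
(H is flat precisely when some compact open subgroup is tidy for H.) -/
def IsTidyForGroup (H : Subgroup (MulAut G)) (U : Subgroup G) : Prop :=
  ∀ α ∈ H, IsTidyFor α U

/-- U_{H0} = ⋂_{α ∈ H} α(U). -/
def UH0 (H : Subgroup (MulAut G)) (U : Subgroup G) : Subgroup G :=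
  ⨅ α : H, smap (α : MulAut G) U

/-- E is a U-eigenfactor of H: E ≤ U, each α ∈ H has α(E) ≤ E or α(E) ≥ E,
and E = ⋂ {α(U) : α ∈ H, α(E) ≥ E}. -/
def IsEigenfactor (H : Subgroup (MulAut G)) (U E : Subgroup G) : Prop :=
  E ≤ U ∧ (∀ α ∈ H, smap α E ≤ E ∨ E ≤ smap α E) ∧
    E = ⨅ (α : H) (_ : E ≤ smap (α : MulAut G) E), smap (α : MulAut G) U

end TdlcFlat

namespace TdlcFlat

variable {G : Type*} [Group G] [TopologicalSpace G] [IsTopologicalGroup G]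

/-- U_ρ = ⋂ {α(U) : α ∈ H, ρ(α) ≥ 0}. -/
def Urho (H : Subgroup (MulAut G)) (ρ : H → ℤ) (U : Subgroup G) : Subgroup G :=
  ⨅ (α : H) (_ : 0 ≤ ρ α), smap (α : MulAut G) U

end TdlcFlat



/-!
Write `U_ρ^{≥n} = ⋂ {α(U) : α ∈ H, ρ(α) ≥ n}`. Since ρ is a homomorphism, `α(U_ρ) = U_ρ^{≥ρ(α)}`,
so `Û_ρ` is the increasing union of the closed subgroups `U_ρ^{≥n}`, hence a subgroup. As `U` is
open, `Û_ρ` is closed as soon as `Û_ρ ∩ U` is, and `Û_ρ ∩ U = U_ρ^{≥1} ∩ U`: for `ρ(δ) ≥ 1`, an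
element of `U` lying in `δᵐ(U)` for all large `m` lies in `U_{δ+}`, by Willis' inclusion
`U ∩ δᴺ(U_{δ+}) ⊆ U_{δ+}`. Via (TA) that inclusion reduces to `U_{τ+} ∩ τ⁻ᴺ(U_{τ-}) ⊆ U_{τ-}`
for `τ = δ⁻¹`. By (TB) and the Baire category theorem, the compact group
`A = U_{τ+} ∩ ⋃ₙ τ⁻ⁿ(U_{τ-})` lies in a single `τ⁻ᴷ(U_{τ-})`; as `τ⁻¹(A) ⊆ A`, the level `K`
can be lowered step by step to `0`.
-/

namespace Subgroup

variable {G : Type*} [Group G] [TopologicalSpace G] [IsTopologicalGroup G]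

theorem isClosed_of_isClosed_inf_of_isOpen {K U : Subgroup G} (hU : IsOpen (U : Set G))
    (hKU : IsClosed ((K ⊓ U : Subgroup G) : Set G)) : IsClosed (K : Set G) := by
  refine isClosed_of_closure_subset fun x hx => ?_
  obtain ⟨s, hsx, hsK⟩ := mem_closure_iff.1 hx _ (hU.preimage (continuous_const_mul x⁻¹))
    (by simp [one_mem U])
  have hyU : s⁻¹ * x ∈ U := by simpa using U.inv_mem (show x⁻¹ * s ∈ U from hsx)
  have hyK : s⁻¹ * x ∈ K.topologicalClosure :=
    mul_mem (K.le_topologicalClosure (inv_mem hsK)) hx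
  have hy : s⁻¹ * x ∈ K ⊓ U := by
    rw [← SetLike.mem_coe, ← hKU.closure_eq, coe_inf, Set.inter_comm]
    exact hU.inter_closure ⟨hyU, hyK⟩
  simpa using mul_mem hsK hy.1

theorem exists_eq_top_of_monotone_of_isClosed [CompactSpace G] (M : ℕ → Subgroup G)
    (hM : Monotone M) (hcl : ∀ n, IsClosed (M n : Set G)) (hcover : ∀ x, ∃ n, x ∈ M n) :
    ∃ n, M n = ⊤ := by
  obtain ⟨N, x, hx⟩ := nonempty_interior_of_iUnion_of_closed hcl
    (Set.iUnion_eq_univ_iff.2 hcover)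
  have hopen : ∀ n, IsOpen (M (N + n) : Set G) := fun n => isOpen_mono (hM (Nat.le_add_right N n))
    ((M N).isOpen_of_mem_nhds (mem_interior_iff_mem_nhds.1 hx))
  obtain ⟨n, hn⟩ := isCompact_univ.elim_directed_cover _ hopen
    (fun x _ => Set.mem_iUnion.2 <| (hcover x).imp fun m hm => hM (Nat.le_add_left m N) hm)
    (Monotone.directed_le fun m n hmn => hM (Nat.add_le_add_left hmn N))
  exact ⟨N + n, eq_top_iff.2 fun x _ => hn (Set.mem_univ x)⟩

theorem exists_le_of_isCompact_of_monotone {A : Subgroup G} (hA : IsCompact (A : Set G))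
    (M : ℕ → Subgroup G) (hM : Monotone M) (hcl : ∀ n, IsClosed (M n : Set G))
    (hcover : ∀ x ∈ A, ∃ n, x ∈ M n) : ∃ n, A ≤ M n := by
  have : CompactSpace A := isCompact_iff_compactSpace.mp hA
  obtain ⟨n, hn⟩ := exists_eq_top_of_monotone_of_isClosed (fun n => (M n).subgroupOf A)
    (fun m n hmn => subgroupOf_mono A (hM hmn))
    (fun n => (hcl n).preimage continuous_subtype_val)
    (fun x => hcover x x.2)
  exact ⟨n, subgroupOf_eq_top.1 hn⟩

end Subgroup

theorem MulAut.continuous_pow {G : Type*} [Mul G] [TopologicalSpace G] {τ : MulAut G}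
    (hτ : Continuous τ) (n : ℕ) : Continuous ⇑(τ ^ n) := by
  induction n with
  | zero => exact continuous_id
  | succ n ih => rw [pow_succ, MulAut.coe_mul]; exact ih.comp hτ

namespace TdlcFlat

section Algebra

variable {G : Type*} [Group G]

theorem mem_smap {α : MulAut G} {S : Subgroup G} {x : G} : x ∈ smap α S ↔ α⁻¹ x ∈ S :=
  Subgroup.mem_map_equiv

theorem smap_one (S : Subgroup G) : smap 1 S = S := by
  ext x
  simp [mem_smap]

theorem smap_mul (α β : MulAut G) (S : Subgroup G) : smap (α * β) S = smap α (smap β S) := by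
  ext x
  simp [mem_smap, mul_inv_rev, MulAut.mul_apply]

theorem smap_mono (α : MulAut G) {S T : Subgroup G} (h : S ≤ T) : smap α S ≤ smap α T :=
  Subgroup.map_mono h

theorem monotone_smap_pow {τ : MulAut G} {S : Subgroup G} (h : S ≤ smap τ S) :
    Monotone fun n : ℕ => smap (τ ^ n) S :=
  monotone_nat_of_le_succ fun n => by
    simpa only [pow_succ, smap_mul] using smap_mono (τ ^ n) h

theorem mem_Uplus {τ : MulAut G} {U : Subgroup G} {x : G} :
    x ∈ Uplus τ U ↔ ∀ k : ℕ, (τ⁻¹ ^ k) x ∈ U := by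
  simp only [Uplus, Subgroup.mem_iInf, mem_smap, inv_pow]

theorem Uplus_inv (τ : MulAut G) (U : Subgroup G) : Uplus τ⁻¹ U = Uminus τ U := rfl

theorem Uminus_inv (τ : MulAut G) (U : Subgroup G) : Uminus τ⁻¹ U = Uplus τ U := by
  simp only [Uminus, Uplus, inv_inv]

theorem Uplus_le_self (τ : MulAut G) (U : Subgroup G) : Uplus τ U ≤ U := fun x hx => by
  simpa using mem_Uplus.1 hx 0

theorem Uplus_le_smap (τ : MulAut G) (U : Subgroup G) : Uplus τ U ≤ smap τ U := fun x hx => by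
  simpa [mem_smap] using mem_Uplus.1 hx 1

theorem Uplus_le_smap_Uplus (τ : MulAut G) (U : Subgroup G) :
    Uplus τ U ≤ smap τ (Uplus τ U) := fun x hx => by
  refine mem_smap.2 (mem_Uplus.2 fun k => ?_)
  simpa [pow_succ] using mem_Uplus.1 hx (k + 1)

end Algebra

section Topology

variable {G : Type*} [Group G] [TopologicalSpace G]

theorem isClosed_smap {α : MulAut G} (hα : Continuous ⇑α⁻¹) {S : Subgroup G}
    (hS : IsClosed (S : Set G)) : IsClosed (smap α S : Set G) := by
  have : (smap α S : Set G) = ⇑(α⁻¹) ⁻¹' (S : Set G) := by ext; exact mem_smap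
  exact this ▸ hS.preimage hα

theorem isClosed_Uplus {τ : MulAut G} (hτi : Continuous ⇑τ⁻¹) {U : Subgroup G}
    (hU : IsClosed (U : Set G)) : IsClosed (Uplus τ U : Set G) := by
  simp only [Uplus, Subgroup.coe_iInf]
  exact isClosed_iInter fun n => isClosed_smap (by simpa using MulAut.continuous_pow hτi n) hU

end Topology

section TopologicalGroup

variable {G : Type*} [Group G] [TopologicalSpace G] [IsTopologicalGroup G]

theorem Uplus_inf_smap_Uminus_le {τ : MulAut G} (hτ : Continuous ⇑τ) (hτi : Continuous ⇑τ⁻¹)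
    {U : Subgroup G} (hUc : IsCompact (U : Set G)) (hUcl : IsClosed (U : Set G))
    (hTB : IsClosed (⋃ n : ℕ, (smap (τ⁻¹ ^ n) (Uminus τ U) : Set G))) (N : ℕ) :
    Uplus τ U ⊓ smap (τ⁻¹ ^ N) (Uminus τ U) ≤ Uminus τ U := by
  set M : ℕ → Subgroup G := fun n => smap (τ⁻¹ ^ n) (Uminus τ U)
  have hM : Monotone M := monotone_smap_pow (Uplus_le_smap_Uplus τ⁻¹ U)
  have hMcl : ∀ n, IsClosed (M n : Set G) := fun n =>
    isClosed_smap (by simpa using MulAut.continuous_pow hτ n) (isClosed_Uplus (by simpa) hUcl)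
  have shift : ∀ n x, τ⁻¹ x ∈ M (n + 1) ↔ x ∈ M n := by
    intro n x
    simp only [M, mem_smap, ← MulAut.mul_apply]
    rw [show (τ⁻¹ ^ (n + 1))⁻¹ * τ⁻¹ = (τ⁻¹ ^ n)⁻¹ by group]
  set A := Uplus τ U ⊓ ⨆ n, M n
  have hA : (A : Set G) = (Uplus τ U : Set G) ∩ ⋃ n, (M n : Set G) := by
    rw [Subgroup.coe_inf, Subgroup.coe_iSup_of_directed hM.directed_le]
  have hAc : IsCompact (A : Set G) :=
    hUc.of_isClosed_subset (hA ▸ (isClosed_Uplus hτi hUcl).inter hTB)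
      (inf_le_left.trans (Uplus_le_self τ U))
  have hAstable : ∀ x ∈ A, τ⁻¹ x ∈ A := by
    rintro x ⟨hxp, hx⟩
    obtain ⟨n, hn⟩ := (Subgroup.mem_iSup_of_directed hM.directed_le).1 hx
    exact ⟨mem_smap.1 (Uplus_le_smap_Uplus τ U hxp),
      Subgroup.mem_iSup_of_mem (n + 1) ((shift n x).2 hn)⟩
  obtain ⟨K, hK⟩ := Subgroup.exists_le_of_isCompact_of_monotone hAc M hM hMcl
    fun x hx => (Subgroup.mem_iSup_of_directed hM.directed_le).1 hx.2
  have hA0 : A ≤ M 0 := Nat.decreasingInduction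
    (fun n _ h x hx => (shift n x).1 (h (hAstable x hx))) hK (Nat.zero_le K)
  rintro x ⟨hxp, hxN⟩
  simpa [M, smap_one] using hA0 ⟨hxp, Subgroup.mem_iSup_of_mem N hxN⟩

theorem inf_smap_pow_Uplus_le {τ : MulAut G} (hτ : Continuous ⇑τ) (hτi : Continuous ⇑τ⁻¹)
    {U : Subgroup G} (hUc : IsCompact (U : Set G)) (hUcl : IsClosed (U : Set G))
    (hTA : (U : Set G) = (Uplus τ U : Set G) * (Uminus τ U : Set G))
    (hTB : IsClosed (⋃ n : ℕ, (smap (τ⁻¹⁻¹ ^ n) (Uminus τ⁻¹ U) : Set G))) (N : ℕ) :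
    U ⊓ smap (τ ^ N) (Uplus τ U) ≤ Uplus τ U := by
  rintro x ⟨hxU, hxN⟩
  obtain ⟨a, ha, b, hb, rfl⟩ : x ∈ (Uplus τ U : Set G) * (Uminus τ U : Set G) := hTA ▸ hxU
  have haN : a ∈ smap (τ ^ N) (Uplus τ U) :=
    monotone_smap_pow (Uplus_le_smap_Uplus τ U) (Nat.zero_le N)
      (show a ∈ smap (τ ^ 0) (Uplus τ U) by rwa [pow_zero, smap_one])
  have hbN : b ∈ smap (τ ^ N) (Uplus τ U) := by
    simpa using mul_mem (inv_mem haN) hxN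
  have key := Uplus_inf_smap_Uminus_le hτi (by simpa) hUc hUcl hTB N
  rw [Uplus_inv, Uminus_inv, inv_inv] at key
  exact mul_mem ha (key ⟨hb, hbN⟩)

end TopologicalGroup

section Filtration

variable {G : Type*} [Group G] (H : Subgroup (MulAut G)) (ρ : H → ℤ) (U : Subgroup G)

def UrhoGe (n : ℤ) : Subgroup G :=
  ⨅ (α : H) (_ : n ≤ ρ α), smap (α : MulAut G) U

def UrhoHat : Subgroup G :=
  ⨆ n : ℤ, UrhoGe H ρ U n

theorem Urho_eq_UrhoGe_zero : Urho H ρ U = UrhoGe H ρ U 0 := rfl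

variable {H ρ U}

theorem mem_UrhoGe {n : ℤ} {x : G} :
    x ∈ UrhoGe H ρ U n ↔ ∀ α : H, n ≤ ρ α → x ∈ smap (α : MulAut G) U := by
  simp only [UrhoGe, Subgroup.mem_iInf]

theorem monotone_UrhoGe : Monotone (UrhoGe H ρ U) := fun _ _ hmn _ hx =>
  mem_UrhoGe.2 fun α hα => mem_UrhoGe.1 hx α (hmn.trans hα)

theorem smap_UrhoGe (hhom : ∀ a b : H, ρ (a * b) = ρ a + ρ b) (α : H) (n : ℤ) :
    smap (α : MulAut G) (UrhoGe H ρ U n) = UrhoGe H ρ U (ρ α + n) := by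
  ext x
  simp only [mem_smap, mem_UrhoGe]
  constructor
  · intro h γ hγ
    have hρ := hhom α (α⁻¹ * γ)
    rw [mul_inv_cancel_left] at hρ
    simpa [mul_inv_rev, MulAut.mul_apply] using h (α⁻¹ * γ) (by omega)
  · intro h β hβ
    simpa [mul_inv_rev, MulAut.mul_apply] using h (α * β) (by rw [hhom]; omega)

theorem coe_UrhoHat : (UrhoHat H ρ U : Set G) = ⋃ n : ℤ, (UrhoGe H ρ U n : Set G) :=
  Subgroup.coe_iSup_of_directed monotone_UrhoGe.directed_le

theorem coe_UrhoHat_eq_iUnion_smap (hhom : ∀ a b : H, ρ (a * b) = ρ a + ρ b)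
    (hsurj : Function.Surjective ρ) :
    (UrhoHat H ρ U : Set G) = ⋃ α : H, (smap (α : MulAut G) (Urho H ρ U) : Set G) := by
  have h : ∀ α : H, smap (α : MulAut G) (Urho H ρ U) = UrhoGe H ρ U (ρ α) := fun α => by
    rw [Urho_eq_UrhoGe_zero, smap_UrhoGe hhom, add_zero]
  simp only [h, coe_UrhoHat]
  exact (hsurj.iUnion_comp fun n => (UrhoGe H ρ U n : Set G)).symm

end Filtration

theorem le_map_pow {M : Type*} [Monoid M] {ρ : M → ℤ} (hhom : ∀ a b, ρ (a * b) = ρ a + ρ b)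
    {δ : M} (hδ : 1 ≤ ρ δ) (m : ℕ) : (m : ℤ) ≤ ρ (δ ^ m) := by
  induction m with
  | zero => have := hhom 1 1; simp only [mul_one] at this; simp; omega
  | succ m ih => rw [pow_succ, hhom]; push_cast; omega

section Closedness

variable {G : Type*} [Group G] [TopologicalSpace G] {H : Subgroup (MulAut G)} {ρ : H → ℤ}
  {U : Subgroup G}

theorem isClosed_UrhoGe (hcont : ∀ α ∈ H, Continuous ⇑α) (hU : IsClosed (U : Set G)) (n : ℤ) :
    IsClosed (UrhoGe H ρ U n : Set G) := by
  simp only [UrhoGe, Subgroup.coe_iInf]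
  exact isClosed_iInter fun α => isClosed_iInter fun _ =>
    isClosed_smap (hcont _ (inv_mem α.2)) hU

variable [IsTopologicalGroup G]

theorem UrhoGe_inf_le_UrhoGe_one (hcont : ∀ α ∈ H, Continuous ⇑α)
    (hhom : ∀ a b : H, ρ (a * b) = ρ a + ρ b) (hUc : IsCompact (U : Set G))
    (hUcl : IsClosed (U : Set G)) (htidy : IsTidyForGroup H U) (n : ℤ) :
    UrhoGe H ρ U n ⊓ U ≤ UrhoGe H ρ U 1 := by
  rintro x ⟨hxn, hxU⟩
  refine mem_UrhoGe.2 fun δ hδ => ?_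
  set τ : MulAut G := (δ : MulAut G)
  have hxN : x ∈ smap (τ ^ n.toNat) (Uplus τ U) := by
    refine mem_smap.2 (mem_Uplus.2 fun k => ?_)
    have hρ : n ≤ ρ (δ ^ (n.toNat + k)) := by
      have := le_map_pow hhom hδ (n.toNat + k)
      push_cast at this
      omega
    simpa [pow_add, mul_inv_rev, MulAut.mul_apply, mem_smap, τ] using mem_UrhoGe.1 hxn _ hρ
  exact Uplus_le_smap τ U <| inf_smap_pow_Uplus_le (hcont _ δ.2) (hcont _ (inv_mem δ.2)) hUc hUcl
    (htidy τ δ.2).1 (htidy τ⁻¹ (inv_mem δ.2)).2 n.toNat ⟨hxU, hxN⟩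

theorem isClosed_UrhoHat (hcont : ∀ α ∈ H, Continuous ⇑α)
    (hhom : ∀ a b : H, ρ (a * b) = ρ a + ρ b) (hU : IsCompactOpen U)
    (htidy : IsTidyForGroup H U) : IsClosed (UrhoHat H ρ U : Set G) := by
  have hUcl : IsClosed (U : Set G) := U.isClosed_of_isOpen hU.2
  have hinf : UrhoHat H ρ U ⊓ U = UrhoGe H ρ U 1 ⊓ U := by
    refine le_antisymm (fun x ⟨hx, hxU⟩ => ⟨?_, hxU⟩) (inf_le_inf_right U (le_iSup _ 1))
    obtain ⟨n, hn⟩ := (Subgroup.mem_iSup_of_directed monotone_UrhoGe.directed_le).1 hx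
    exact UrhoGe_inf_le_UrhoGe_one hcont hhom hU.1 hUcl htidy n ⟨hn, hxU⟩
  refine Subgroup.isClosed_of_isClosed_inf_of_isOpen hU.2 ?_
  rw [hinf, Subgroup.coe_inf]
  exact (isClosed_UrhoGe hcont hUcl 1).inter hUcl

end Closedness

end TdlcFlat

open TdlcFlat in
theorem Urho_hat_closed_subgroup_general
    {G : Type*} [Group G] [TopologicalSpace G] [IsTopologicalGroup G]
    (H : Subgroup (MulAut G))
    (hcont : ∀ α ∈ H, Continuous ⇑α)
    (ρ : H → ℤ) (hhom : ∀ a b : H, ρ (a * b) = ρ a + ρ b)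
    (hsurj : Function.Surjective ρ)
    (U : Subgroup G) (hU : IsCompactOpen U) (htidy : IsTidyForGroup H U) :
    ∃ K : Subgroup G,
      (K : Set G) = (⋃ α : H, (smap (α : MulAut G) (Urho H ρ U) : Set G)) ∧
        IsClosed (K : Set G) :=
  ⟨UrhoHat H ρ U, coe_UrhoHat_eq_iUnion_smap hhom hsurj, isClosed_UrhoHat hcont hhom hU htidy⟩

open TdlcFlat in
/-- Let G be a tdlc group, H ≤ Aut(G) flat, ρ : H → ℤ a
surjective homomorphism and U a compact open subgroup tidy for H. Then
Û_ρ = ⋃_{α ∈ H} α(U_ρ) is a closed subgroup of G. -/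
theorem Urho_hat_closed_subgroup
    {G : Type*} [Group G] [TopologicalSpace G] [IsTopologicalGroup G]
    [LocallyCompactSpace G] [TotallyDisconnectedSpace G]
    (H : Subgroup (MulAut G))
    (hcont : ∀ α ∈ H, Continuous ⇑α)
    (ρ : H → ℤ) (hhom : ∀ a b : H, ρ (a * b) = ρ a + ρ b)
    (hsurj : Function.Surjective ρ)
    (U : Subgroup G) (hU : IsCompactOpen U) (htidy : IsTidyForGroup H U) :
    ∃ K : Subgroup G,
      (K : Set G) = (⋃ α : H, (smap (α : MulAut G) (Urho H ρ U) : Set G)) ∧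
        IsClosed (K : Set G) :=
  Urho_hat_closed_subgroup_general H hcont ρ hhom hsurj U hU htidy
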